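/- Let Σ be the ranked alphabet with one constant ♯ and one binary symbol f, and let R over Σ consist of the single rule f(x₁, ♯) → f(x₁, x₁). Define the left combs by left₀ = ♯ and left_{n+1} = f(left_n, ♯), and let L = {left_n : n ≥ 0}. Then L is a recognizable tree language over Σ, but the descendant set R*_Σ(L) is not recognizable. -/

import Mathlib

set_option autoImplicit false

/-!
Basic framework: ranked alphabets, terms, term rewrite systems,
bottom-up tree automata, recognizability.
A ranked alphabet is modelled by a (finite) type `σ` together with an
arity function `ar : σ → ℕ`.  `Tm.var n` denotes the variable `x_{n+1}`,
so `T_Σ(X_m)` corresponds to terms all of whose variables satisfy `n < m`,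
and ground terms (`T_Σ`) are terms satisfying `Tm.Ground`.
-/

/-- Terms over the ranked alphabet `(σ, ar)` with variables `x₁, x₂, …`
(`var n` is `x_{n+1}`). -/
inductive Tm (σ : Type) (ar : σ → ℕ) : Type
  | var : ℕ → Tm σ ar
  | app : (f : σ) → (Fin (ar f) → Tm σ ar) → Tm σ ar

namespace Tm

variable {σ γ : Type} {ar : σ → ℕ} {arγ : γ → ℕ}

/-- Application of a substitution `θ` (assigning a term to each variable). -/
def subst (θ : ℕ → Tm σ ar) : Tm σ ar → Tm σ ar
  | var n => θ n
  | app f ts => app f fun i => (ts i).subst θ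

/-- A term is ground if it contains no variables. -/
def Ground : Tm σ ar → Prop
  | var _ => False
  | app _ ts => ∀ i, (ts i).Ground

/-- The set of (indices of) variables occurring in a term. -/
def vars : Tm σ ar → Set ℕ
  | var n => {n}
  | app _ ts => ⋃ i, (ts i).vars

/-- Number of occurrences of the variable `x_{n+1}` in a term. -/
def count (n : ℕ) : Tm σ ar → ℕ
  | var m => if m = n then 1 else 0
  | app _ ts => ∑ i, (ts i).count n

/-- A term is linear if every variable occurs at most once in it. -/
def Linear (t : Tm σ ar) : Prop := ∀ n, t.count n ≤ 1

/-- The symbol `s` occurs in the term. -/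
def symOccurs (s : σ) : Tm σ ar → Prop
  | var _ => False
  | app f ts => f = s ∨ ∃ i, (ts i).symOccurs s

/-- Height of a term (constants and variables have height 0). -/
def height : Tm σ ar → ℕ
  | var _ => 0
  | app _ ts => Finset.univ.sup fun i => (ts i).height + 1

/-- Renaming of the alphabet along an arity-preserving map. -/
def map (ι : σ → γ) (h : ∀ s, arγ (ι s) = ar s) : Tm σ ar → Tm γ arγ
  | var n => var n
  | app f ts => app (ι f) fun i => (ts (Fin.cast (h f) i)).map ι h

/-- The subterm of `t` at a position (a list of argument indices), if defined. -/
def subAt : Tm σ ar → List ℕ → Option (Tm σ ar)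
  | t, [] => some t
  | var _, _ :: _ => none
  | app f ts, i :: p => if h : i < ar f then (ts ⟨i, h⟩).subAt p else none

/-- Subterm relation. -/
inductive Subtm : Tm σ ar → Tm σ ar → Prop
  | refl (t : Tm σ ar) : Subtm t t
  | app {s : Tm σ ar} {f : σ} {ts : Fin (ar f) → Tm σ ar} (i : Fin (ar f)) :
      Subtm s (ts i) → Subtm s (Tm.app f ts)

end Tm

section Rewriting

variable {σ γ : Type} {ar : σ → ℕ} {arγ : γ → ℕ}

/-- One-step rewriting by the rule set `R`: apply a rule under a substitution
at the root, or rewrite inside one argument. -/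
inductive Step (R : Set (Tm σ ar × Tm σ ar)) : Tm σ ar → Tm σ ar → Prop
  | rule {l r : Tm σ ar} (θ : ℕ → Tm σ ar) (h : (l, r) ∈ R) :
      Step R (l.subst θ) (r.subst θ)
  | congr {f : σ} {ts : Fin (ar f) → Tm σ ar} {t' : Tm σ ar} (i : Fin (ar f)) :
      Step R (ts i) t' → Step R (Tm.app f ts) (Tm.app f (Function.update ts i t'))

/-- Many-step rewriting: reflexive-transitive closure of `Step`. -/
def Steps (R : Set (Tm σ ar × Tm σ ar)) : Tm σ ar → Tm σ ar → Prop :=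
  Relation.ReflTransGen (Step R)

/-- `R` is a term rewrite system: finitely many rules, and every variable of a
right-hand side occurs in the corresponding left-hand side. -/
def IsTRS (R : Set (Tm σ ar × Tm σ ar)) : Prop :=
  R.Finite ∧ ∀ lr ∈ R, lr.2.vars ⊆ lr.1.vars

/-- The set `R*(L)` of descendants of members of `L`. -/
def Desc (R : Set (Tm σ ar × Tm σ ar)) (L : Set (Tm σ ar)) : Set (Tm σ ar) :=
  {p | ∃ q ∈ L, Steps R q p}

/-- `R` is terminating: there is no infinite reduction sequence. -/
def Terminating (R : Set (Tm σ ar × Tm σ ar)) : Prop :=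
  ¬ ∃ f : ℕ → Tm σ ar, ∀ n, Step R (f n) (f (n + 1))

/-- `R` is confluent. -/
def Confluent (R : Set (Tm σ ar × Tm σ ar)) : Prop :=
  ∀ a b c, Steps R a b → Steps R a c → ∃ d, Steps R b d ∧ Steps R c d

/-- `u` is an `R`-normal form of `t`. -/
def NormalFormOf (R : Set (Tm σ ar × Tm σ ar)) (t u : Tm σ ar) : Prop :=
  Steps R t u ∧ ¬ ∃ v, Step R u v

/-- The term is a variable. -/
def IsVarTm (t : Tm σ ar) : Prop := ∃ n, t = Tm.var n

/-- Every left-hand side is linear. -/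
def LeftLinearTRS (R : Set (Tm σ ar × Tm σ ar)) : Prop :=
  ∀ lr ∈ R, lr.1.Linear

/-- All left- and right-hand sides are linear. -/
def LinearTRS (R : Set (Tm σ ar × Tm σ ar)) : Prop :=
  ∀ lr ∈ R, lr.1.Linear ∧ lr.2.Linear

/-- No rule has a variable as left-hand side or as right-hand side. -/
def CollapseFree (R : Set (Tm σ ar × Tm σ ar)) : Prop :=
  ∀ lr ∈ R, ¬ IsVarTm lr.1 ∧ ¬ IsVarTm lr.2

/-- Transport of a rule set along an arity-preserving renaming of the alphabet. -/
def mapRules (ι : σ → γ) (h : ∀ s, arγ (ι s) = ar s) (R : Set (Tm σ ar × Tm σ ar)) :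
    Set (Tm γ arγ × Tm γ arγ) :=
  (fun lr => (lr.1.map ι h, lr.2.map ι h)) '' R

end Rewriting

/-- A bottom-up tree automaton over `(σ, ar)` with state type `Q`:
transition rules `δ(q₁,…,qₙ) → q`, λ-rules `q → q'`, and final states. -/
structure BTA (σ : Type) (ar : σ → ℕ) (Q : Type) where
  trans : ∀ f : σ, (Fin (ar f) → Q) → Q → Prop
  eps : Q → Q → Prop
  final : Q → Prop

namespace BTA

variable {σ : Type} {ar : σ → ℕ} {Q : Type}

/-- `t →* q`: the (ground) term `t` can be rewritten to the state `q`. -/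
inductive Reach (A : BTA σ ar Q) : Tm σ ar → Q → Prop
  | app {f : σ} {ts : Fin (ar f) → Tm σ ar} {qs : Fin (ar f) → Q} {q : Q} :
      (∀ i, Reach A (ts i) (qs i)) → A.trans f qs q → Reach A (Tm.app f ts) q
  | eps {t : Tm σ ar} {q q' : Q} : Reach A t q → A.eps q q' → Reach A t q'

/-- The tree language recognized by the automaton. -/
def Lang (A : BTA σ ar Q) : Set (Tm σ ar) := {t | ∃ q, A.final q ∧ A.Reach t q}

end BTA

/-- A tree language is recognizable if some bottom-up tree automaton with a
finite state set recognizes it. -/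
def Recognizable {σ : Type} {ar : σ → ℕ} (L : Set (Tm σ ar)) : Prop :=
  ∃ (Q : Type) (_ : Finite Q) (A : BTA σ ar Q), A.Lang = L

/-- `R` (a TRS over all of `σ`, thought of as `sign(R)`) preserves
recognizability of finite tree languages: for every ranked alphabet extending
`σ` (i.e. every finite type with an arity-preserving injection from `σ`) and
every finite tree language of ground terms, the descendant set is recognizable. -/
def PRF {σ : Type} {ar : σ → ℕ} (R : Set (Tm σ ar × Tm σ ar)) : Prop :=
  ∀ (γ : Type) (arγ : γ → ℕ), Finite γ →
    ∀ ι : σ → γ, Function.Injective ι →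
      ∀ h : ∀ s, arγ (ι s) = ar s,
        ∀ L : Set (Tm γ arγ), L.Finite → (∀ t ∈ L, t.Ground) →
          Recognizable (Desc (mapRules ι h R) L)

/-- `R` preserves recognizability: as `PRF`, but for arbitrary recognizable
tree languages. -/
def PR {σ : Type} {ar : σ → ℕ} (R : Set (Tm σ ar × Tm σ ar)) : Prop :=
  ∀ (γ : Type) (arγ : γ → ℕ), Finite γ →
    ∀ ι : σ → γ, Function.Injective ι →
      ∀ h : ∀ s, arγ (ι s) = ar s,
        ∀ L : Set (Tm γ arγ), Recognizable L →
          Recognizable (Desc (mapRules ι h R) L)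

/-! ### Common setup for Statements 2 and 3: the alphabet `{f(2), ♯(0)}` and
the TRS `{ f(x₁, ♯) → f(x₁, x₁) }`. -/

inductive Sg2 : Type
  | f | sharp
deriving DecidableEq

instance instFintypeSg2 : Fintype Sg2 :=
  ⟨{Sg2.f, Sg2.sharp}, fun x => by cases x <;> simp⟩

def ar2 : Sg2 → ℕ
  | .f => 2
  | .sharp => 0

/-- the constant `♯` -/
def sharp2 : Tm Sg2 ar2 := .app .sharp ![]

/-- `f(a, b)` -/
def f2 (a b : Tm Sg2 ar2) : Tm Sg2 ar2 := .app .f ![a, b]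

/-- the TRS `{ f(x₁, ♯) → f(x₁, x₁) }` -/
def R2 : Set (Tm Sg2 ar2 × Tm Sg2 ar2) :=
  {(f2 (.var 0) sharp2, f2 (.var 0) (.var 0))}

/-! ### Statement 3 -/

/-- the left combs: `left₀ = ♯`, `left_{n+1} = f(left_n, ♯)` -/
def leftComb2 : ℕ → Tm Sg2 ar2
  | 0 => sharp2
  | n + 1 => f2 (leftComb2 n) sharp2

/-!
The combs are accepted by a two-state automaton (reading `♯` or a nonempty comb).
For the descendants, the root rule duplicates its argument, so in every descendant `f(a, b)`
of a comb either `b = ♯` or `a` and `b` descend from a common term; as no step leads into a comb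
except the trivial `f(♯, ♯) → f(♯, ♯)`, this puts `f(left_n, left_m)` with `m ≥ 1` among the
descendants only for `n = m`. Yet `f(left_n, left_n)` is a descendant for every `n`, and an
automaton with finitely many states must reach the same state on two distinct right arguments
`left_n`, `left_m`, so it would also accept `f(left_n, left_m)`.
-/

section Automata

variable {σ : Type} {ar : σ → ℕ} {Q : Type}

lemma BTA.Reach.exists_of_app {A : BTA σ ar Q} {g : σ} {ts : Fin (ar g) → Tm σ ar} {q : Q}
    (h : A.Reach (.app g ts) q) :
    ∃ ps : Fin (ar g) → Q, (∀ i, A.Reach (ts i) (ps i)) ∧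
      ∀ ts' : Fin (ar g) → Tm σ ar, (∀ i, A.Reach (ts' i) (ps i)) → A.Reach (.app g ts') q := by
  generalize ht : Tm.app g ts = t at h
  induction h with
  | app hts htrans =>
    cases ht
    exact ⟨_, hts, fun _ hts' => .app hts' htrans⟩
  | eps _ heps ih =>
    obtain ⟨ps, hps, hclosed⟩ := ih ht
    exact ⟨ps, hps, fun ts' hts' => .eps (hclosed ts' hts') heps⟩

/-- Pumping: two of the infinitely many arguments `ts n i` reach the same state. -/
lemma Recognizable.exists_update_mem {L : Set (Tm σ ar)} (hL : Recognizable L) {g : σ}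
    (ts : ℕ → Fin (ar g) → Tm σ ar) (hts : ∀ n, Tm.app g (ts n) ∈ L) (i : Fin (ar g)) :
    ∃ n m, n ≠ m ∧ Tm.app g (Function.update (ts n) i (ts m i)) ∈ L := by
  obtain ⟨Q, _, A, rfl⟩ := hL
  choose q hfinal hreach using hts
  choose ps hps hclosed using fun n => (hreach n).exists_of_app
  obtain ⟨n, m, hnm, hstate⟩ := Finite.exists_ne_map_eq_of_infinite fun n => ps n i
  refine ⟨n, m, hnm, q n, hfinal n, hclosed n _ fun j => ?_⟩
  rcases eq_or_ne j i with rfl | hj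
  · simpa only [Function.update_self, hstate] using hps m j
  · simpa only [Function.update_of_ne hj] using hps n j

end Automata

lemma f2_inj {a b c d : Tm Sg2 ar2} : f2 a b = f2 c d ↔ a = c ∧ b = d := by
  refine ⟨fun h => ?_, fun ⟨hac, hbd⟩ => hac ▸ hbd ▸ rfl⟩
  injection h with _ h
  exact ⟨congrFun h 0, congrFun h 1⟩

lemma f2_ne_sharp2 (a b : Tm Sg2 ar2) : f2 a b ≠ sharp2 := by
  rintro ⟨⟩

lemma app_f_eq_f2 (ts : Fin (ar2 .f) → Tm Sg2 ar2) :
    Tm.app .f ts = f2 (ts (0 : Fin 2)) (ts (1 : Fin 2)) := by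
  unfold f2
  congr 1
  funext i
  fin_cases i <;> rfl

lemma subst_sharp2 (θ : ℕ → Tm Sg2 ar2) : sharp2.subst θ = sharp2 := by
  unfold sharp2 Tm.subst
  congr 1
  funext i
  exact i.elim0

lemma subst_f2 (θ : ℕ → Tm Sg2 ar2) (a b : Tm Sg2 ar2) :
    (f2 a b).subst θ = f2 (a.subst θ) (b.subst θ) := by
  show Tm.app .f (fun i => (![a, b] i).subst θ) = _
  congr 1
  funext i
  fin_cases i <;> rfl

lemma step_R2_root (a : Tm Sg2 ar2) : Step R2 (f2 a sharp2) (f2 a a) := by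
  simpa only [subst_f2, subst_sharp2, Tm.subst] using
    Step.rule (R := R2) (fun _ => a) (Set.mem_singleton _)

lemma step_R2_cases {s t : Tm Sg2 ar2} (h : Step R2 s t) :
    (∃ a, s = f2 a sharp2 ∧ t = f2 a a) ∨
    (∃ a a' b, Step R2 a a' ∧ s = f2 a b ∧ t = f2 a' b) ∨
    (∃ a b b', Step R2 b b' ∧ s = f2 a b ∧ t = f2 a b') := by
  cases h with
  | rule θ hR =>
    obtain ⟨rfl, rfl⟩ := Prod.mk.inj (Set.mem_singleton_iff.mp hR)
    exact .inl ⟨θ 0, by simp only [subst_f2, subst_sharp2, Tm.subst], subst_f2 ..⟩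
  | @congr g ts t' i hi =>
    cases g with
    | sharp => exact i.elim0
    | f =>
      rw [app_f_eq_f2 ts, app_f_eq_f2]
      fin_cases i
      · exact .inr (.inl ⟨_, _, _, hi, rfl, rfl⟩)
      · exact .inr (.inr ⟨_, _, _, hi, rfl, rfl⟩)

lemma not_step_R2_sharp2 (t : Tm Sg2 ar2) : ¬ Step R2 sharp2 t := by
  intro h
  rcases step_R2_cases h with ⟨_, h, _⟩ | ⟨_, _, _, _, h, _⟩ | ⟨_, _, _, _, h, _⟩ <;>
    exact f2_ne_sharp2 _ _ h.symm

lemma not_step_R2_to_sharp2 (s : Tm Sg2 ar2) : ¬ Step R2 s sharp2 := by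
  intro h
  rcases step_R2_cases h with ⟨_, _, h⟩ | ⟨_, _, _, _, _, h⟩ | ⟨_, _, _, _, _, h⟩ <;>
    exact f2_ne_sharp2 _ _ h.symm

lemma leftComb2_injective : Function.Injective leftComb2 := by
  intro n m h
  induction n generalizing m with
  | zero => cases m with
    | zero => rfl
    | succ m => exact absurd h.symm (f2_ne_sharp2 _ _)
  | succ n ih => cases m with
    | zero => exact absurd h (f2_ne_sharp2 _ _)
    | succ m => exact congrArg _ (ih (f2_inj.mp h).1)

/-- The only step into a comb is the trivial `f(♯, ♯) → f(♯, ♯)`. -/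
lemma eq_of_step_R2_leftComb2 {s : Tm Sg2 ar2} {m : ℕ} (h : Step R2 s (leftComb2 m)) :
    s = leftComb2 m := by
  induction m generalizing s with
  | zero => exact absurd h (not_step_R2_to_sharp2 _)
  | succ m ih =>
    rcases step_R2_cases h with ⟨a, rfl, ht⟩ | ⟨a, a', b, ha, rfl, ht⟩ | ⟨a, b, b', hb, rfl, ht⟩
    · obtain ⟨rfl, -⟩ := f2_inj.mp ht
      rfl
    · obtain ⟨rfl, rfl⟩ := f2_inj.mp ht
      rw [ih ha]
      rfl
    · obtain ⟨-, rfl⟩ := f2_inj.mp ht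
      exact absurd hb (not_step_R2_to_sharp2 _)

lemma eq_of_steps_R2_leftComb2 {s : Tm Sg2 ar2} {m : ℕ} (h : Steps R2 s (leftComb2 m)) :
    s = leftComb2 m := by
  induction h using Relation.ReflTransGen.head_induction_on with
  | refl => rfl
  | head hstep _ ih => exact eq_of_step_R2_leftComb2 (ih ▸ hstep)

def ArgsShareAncestor (t : Tm Sg2 ar2) : Prop :=
  ∀ a b, t = f2 a b → b = sharp2 ∨ ∃ w, Steps R2 w a ∧ Steps R2 w b

lemma ArgsShareAncestor.step {s t : Tm Sg2 ar2} (hs : ArgsShareAncestor s) (h : Step R2 s t) :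
    ArgsShareAncestor t := by
  intro c d ht
  rcases step_R2_cases h with ⟨a, -, rfl⟩ | ⟨a, a', b, ha, rfl, rfl⟩ | ⟨a, b, b', hb, rfl, rfl⟩
  · obtain ⟨rfl, rfl⟩ := f2_inj.mp ht
    exact .inr ⟨a, .refl, .refl⟩
  · obtain ⟨rfl, rfl⟩ := f2_inj.mp ht
    exact (hs a b rfl).imp id fun ⟨w, hwa, hwb⟩ => ⟨w, hwa.tail ha, hwb⟩
  · obtain ⟨rfl, rfl⟩ := f2_inj.mp ht
    rcases hs a b rfl with rfl | ⟨w, hwa, hwb⟩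
    · exact absurd hb (not_step_R2_sharp2 _)
    · exact .inr ⟨w, hwa, hwb.tail hb⟩

lemma ArgsShareAncestor.steps {s t : Tm Sg2 ar2} (hs : ArgsShareAncestor s) (h : Steps R2 s t) :
    ArgsShareAncestor t := by
  induction h with
  | refl => exact hs
  | tail _ hstep ih => exact ih.step hstep

lemma argsShareAncestor_leftComb2 (n : ℕ) : ArgsShareAncestor (leftComb2 n) := by
  intro a b h
  cases n with
  | zero => exact absurd h.symm (f2_ne_sharp2 _ _)
  | succ n => exact .inl (f2_inj.mp h).2.symm

lemma f2_leftComb2_mem_desc (n : ℕ) :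
    f2 (leftComb2 n) (leftComb2 n) ∈ Desc R2 {t | ∃ n, t = leftComb2 n} :=
  ⟨leftComb2 (n + 1), ⟨n + 1, rfl⟩, .single (step_R2_root _)⟩

lemma eq_of_f2_leftComb2_mem_desc {n m : ℕ}
    (h : f2 (leftComb2 n) (leftComb2 (m + 1)) ∈ Desc R2 {t | ∃ n, t = leftComb2 n}) :
    n = m + 1 := by
  obtain ⟨_, ⟨k, rfl⟩, hk⟩ := h
  rcases (argsShareAncestor_leftComb2 k).steps hk _ _ rfl with h | ⟨w, hwn, hwm⟩
  · exact absurd h (f2_ne_sharp2 _ _)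
  · exact leftComb2_injective
      ((eq_of_steps_R2_leftComb2 hwn).symm.trans (eq_of_steps_R2_leftComb2 hwm))

/-- State `false` reads `♯`, state `true` a comb `f(left_n, ♯)`. -/
def combAutomaton : BTA Sg2 ar2 Bool where
  trans
    | .sharp, _, q => q = false
    | .f, qs, q => qs (1 : Fin 2) = false ∧ q = true
  eps _ _ := False
  final _ := True

lemma combAutomaton_reach_sharp2 : combAutomaton.Reach sharp2 false :=
  .app (A := combAutomaton) (qs := ![]) (fun i => i.elim0) rfl

lemma combAutomaton_reach_leftComb2 (n : ℕ) :
    combAutomaton.Reach (leftComb2 n) (decide (n ≠ 0)) := by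
  induction n with
  | zero => exact combAutomaton_reach_sharp2
  | succ n ih =>
    refine .app (A := combAutomaton) (f := .f) (qs := ![decide (n ≠ 0), false])
      (fun i => ?_) ⟨rfl, rfl⟩
    fin_cases i
    · exact ih
    · exact combAutomaton_reach_sharp2

lemma exists_eq_leftComb2_of_combAutomaton_reach {t : Tm Sg2 ar2} {q : Bool}
    (h : combAutomaton.Reach t q) : ∃ n, t = leftComb2 n ∧ q = decide (n ≠ 0) := by
  induction h with
  | @app g ts qs q _ htrans ih =>
    cases g with
    | sharp => exact ⟨0, congrArg _ (funext fun i => i.elim0), htrans⟩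
    | f =>
      obtain ⟨h1, rfl⟩ := htrans
      obtain ⟨n, hn, -⟩ := ih (0 : Fin 2)
      obtain ⟨k, hk, hkq⟩ := ih (1 : Fin 2)
      obtain rfl : k = 0 := by simpa [h1] using hkq
      exact ⟨n + 1, by rw [app_f_eq_f2, hn, hk]; rfl, rfl⟩
  | eps _ heps => exact heps.elim

theorem recognizable_leftCombs : Recognizable {t : Tm Sg2 ar2 | ∃ n : ℕ, t = leftComb2 n} := by
  refine ⟨Bool, inferInstance, combAutomaton, Set.ext fun t => ⟨?_, ?_⟩⟩
  · rintro ⟨q, -, h⟩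
    exact (exists_eq_leftComb2_of_combAutomaton_reach h).imp fun _ => And.left
  · rintro ⟨n, rfl⟩
    exact ⟨_, trivial, combAutomaton_reach_leftComb2 n⟩

theorem not_recognizable_desc_R2_leftCombs :
    ¬ Recognizable (Desc R2 {t : Tm Sg2 ar2 | ∃ n : ℕ, t = leftComb2 n}) := by
  intro hD
  obtain ⟨n, m, hnm, h⟩ := hD.exists_update_mem (g := .f)
    (fun n => ![leftComb2 (n + 1), leftComb2 (n + 1)])
    (fun n => f2_leftComb2_mem_desc (n + 1)) (1 : Fin 2)
  rw [app_f_eq_f2] at h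
  exact hnm (Nat.succ_injective (eq_of_f2_leftComb2_mem_desc h))

theorem stmt_3 :
    Recognizable {t : Tm Sg2 ar2 | ∃ n : ℕ, t = leftComb2 n} ∧
    ¬ Recognizable (Desc R2 {t : Tm Sg2 ar2 | ∃ n : ℕ, t = leftComb2 n}) :=
  ⟨recognizable_leftCombs, not_recognizable_desc_R2_leftCombs⟩
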